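/- For every d ≥ 4, the Gaussian moment surface G_{1,d} ⊂ ℙ^d is not uniruled by lines; that is, it is not covered by a one-dimensional family of lines contained in it. -/

import Mathlib

/-!
The Gaussian moments satisfy `m (n + 2) = μ m (n + 1) + (n + 1) t m n` with `μ = m 1` and
`t = m 2 - m 1 ^ 2`; made homogeneous these are cubics vanishing on `𝒢_{1,d}`. A line through a
point `g` of the parametrization (where `m 0 = 1`) is `g + s b` with `b 0 = 0`. On it the cubics
for `n = 1, 2` have leading coefficients `2 b 1 ^ 3` and `-3 b 2 ^ 2` in `s`, so `b 1 = b 2 = 0`;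
after that the `n`-th cubic is affine in `s` with slope `b (n + 2)`, so `b = 0`. Hence no line
of `𝒢_{1,d}` passes through a point of the parametrized set, which is Zariski dense.
-/

noncomputable section

namespace ContactLoci

variable {K : Type*} [Field K] {ι : Type*} [Fintype ι]

/-- Projective space over `K` with homogeneous coordinates indexed by `ι`. -/
abbrev PP (K : Type*) [Field K] (ι : Type*) : Type _ :=
  Projectivization K (ι → K)

/-- The affine cone over a set of projective points. -/
def coneOf (S : Set (PP K ι)) : Set (ι → K) :=
  ⋃ x ∈ S, (x.submodule : Set (ι → K))

/-- The linear span, in the underlying vector space, of the cone over `S`. -/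
def vspan (S : Set (PP K ι)) : Submodule K (ι → K) :=
  Submodule.span K (coneOf S)

/-- The projective linear span of a set of projective points. -/
def projSpan (S : Set (PP K ι)) : Set (PP K ι) :=
  {x | x.submodule ≤ vspan S}

/-- The projective dimension of the linear span of `S` (`-1` for `S = ∅`). -/
def projDim (S : Set (PP K ι)) : ℤ :=
  (Module.finrank K (vspan S) : ℤ) - 1

/-- A set of projective points is non-degenerate if its linear span is everything. -/
def Nondegenerate (S : Set (PP K ι)) : Prop :=
  vspan S = ⊤

/-- The common zero locus in projective space of a set of polynomials. -/
def zeroLocus (S : Set (MvPolynomial ι K)) : Set (PP K ι) :=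
  {x | ∀ f ∈ S, ∀ v ∈ x.submodule, MvPolynomial.eval v f = 0}

/-- Zariski-closed subsets of projective space: common zero loci of sets of
homogeneous polynomials. -/
def IsZClosed (X : Set (PP K ι)) : Prop :=
  ∃ S : Set (MvPolynomial ι K), (∀ f ∈ S, ∃ d : ℕ, f.IsHomogeneous d) ∧ X = zeroLocus S

/-- Zariski closure. -/
def zclosure (S : Set (PP K ι)) : Set (PP K ι) :=
  ⋂₀ {Y | IsZClosed Y ∧ S ⊆ Y}

/-- Irreducibility with respect to the Zariski topology. -/
def IsZIrreducible (S : Set (PP K ι)) : Prop :=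
  S.Nonempty ∧ ∀ Y Z : Set (PP K ι), IsZClosed Y → IsZClosed Z → S ⊆ Y ∪ Z → S ⊆ Y ∨ S ⊆ Z

/-- An integral projective variety: a Zariski-closed irreducible subset. -/
def IsIntegralVariety (X : Set (PP K ι)) : Prop :=
  IsZClosed X ∧ IsZIrreducible X

/-- `C` is an irreducible component of `S`: a maximal irreducible subset of `S`. -/
def IsZIrredComponent (S C : Set (PP K ι)) : Prop :=
  IsZIrreducible C ∧ C ⊆ S ∧ ∀ D : Set (PP K ι), IsZIrreducible D → D ⊆ S → C ⊆ D → C = D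

/-- The dimension of a set: the Krull dimension of the poset of irreducible
Zariski-closed subsets of its Zariski closure (`⊥` for the empty set). -/
def zdim (S : Set (PP K ι)) : WithBot ℕ∞ :=
  Order.krullDim ({Y : Set (PP K ι) // IsZClosed Y ∧ IsZIrreducible Y ∧ Y ⊆ zclosure S})

/-- A property holds at a general point of `X`: it holds away from a proper
Zariski-closed subset. -/
def HoldsGenerically (X : Set (PP K ι)) (P : PP K ι → Prop) : Prop :=
  ∃ Y : Set (PP K ι), IsZClosed Y ∧ ¬X ⊆ Y ∧ ∀ x ∈ X \ Y, P x

/-- Zero locus of multihomogeneous polynomials in a self-product of projective space. -/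
def multiZeroLocus {m : ℕ} (S : Set (MvPolynomial (Fin m × ι) K)) :
    Set (Fin m → PP K ι) :=
  {u | ∀ f ∈ S, ∀ v : Fin m → ι → K, (∀ i, v i ∈ (u i).submodule) →
    MvPolynomial.eval (fun p => v p.1 p.2) f = 0}

/-- Zariski-closed subsets of the `m`-fold self-product of projective space. -/
def IsMultiZClosed {m : ℕ} (T : Set (Fin m → PP K ι)) : Prop :=
  ∃ S : Set (MvPolynomial (Fin m × ι) K),
    (∀ f ∈ S, ∀ i : Fin m, ∃ d : ℕ,
      MvPolynomial.IsWeightedHomogeneous (fun p : Fin m × ι => if p.1 = i then 1 else 0) f d) ∧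
    T = multiZeroLocus S

/-- A property holds for a general `m`-tuple of points of `X`. -/
def HoldsForGeneralTuples (X : Set (PP K ι)) (m : ℕ) (P : (Fin m → PP K ι) → Prop) : Prop :=
  ∃ T : Set (Fin m → PP K ι), IsMultiZClosed T ∧
    (∃ u : Fin m → PP K ι, (∀ i, u i ∈ X) ∧ u ∉ T) ∧
    ∀ u : Fin m → PP K ι, (∀ i, u i ∈ X) → u ∉ T → P u

/-- The homogeneous vanishing ideal of `X` (as a set of homogeneous polynomials). -/
def homogVanishingIdeal (X : Set (PP K ι)) : Set (MvPolynomial ι K) :=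
  {f | (∃ d : ℕ, f.IsHomogeneous d) ∧ ∀ x ∈ X, ∀ v ∈ x.submodule, MvPolynomial.eval v f = 0}

/-- The embedded (projective) tangent space of `X` at `x`. -/
def embTangentSpace (X : Set (PP K ι)) (x : PP K ι) : Set (PP K ι) :=
  {y | ∀ f ∈ homogVanishingIdeal X,
    ∑ i : ι, y.rep i * MvPolynomial.eval x.rep (MvPolynomial.pderiv i f) = 0}

/-- Smooth points of `X`. -/
def IsSmoothPoint (X : Set (PP K ι)) (x : PP K ι) : Prop :=
  x ∈ X ∧ zdim (embTangentSpace X x) = zdim X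

/-- `M_A`: the linear span of the tangent spaces of `X` at the points of `A`. -/
def tangentSpan (X A : Set (PP K ι)) : Set (PP K ι) :=
  projSpan (⋃ a ∈ A, embTangentSpace X a)

/-- The locus of smooth points of `X` at which `M_A` is tangent to `X`. -/
def tangencyLocus (X A : Set (PP K ι)) : Set (PP K ι) :=
  {x | IsSmoothPoint X x ∧ embTangentSpace X x ⊆ tangentSpan X A}

/-- The tangential contact locus of `X` at `A`: the closure of the union of the
irreducible components of the tangency locus meeting `A`. -/
def contactLocus (X A : Set (PP K ι)) : Set (PP K ι) :=
  zclosure (⋃ C ∈ {C : Set (PP K ι) |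
    IsZIrredComponent (tangencyLocus X A) C ∧ (C ∩ A).Nonempty}, C)

/-- `X` is weakly `k`-defective: the tangential contact locus at `k` general points
has positive dimension. -/
def WeaklyDefective (X : Set (PP K ι)) (k : ℕ) : Prop :=
  HoldsForGeneralTuples X k fun u => 0 < zdim (contactLocus X (Set.range u))

/-- The `k`-th secant variety of `X`. -/
def secant (k : ℕ) (X : Set (PP K ι)) : Set (PP K ι) :=
  zclosure {q | ∃ S : Finset (PP K ι), ↑S ⊆ X ∧ S.card = k ∧ q ∈ projSpan (S : Set (PP K ι))}

/-- The `X`-rank of a point. -/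
def xrank (X : Set (PP K ι)) (q : PP K ι) : ℕ :=
  sInf {k | ∃ S : Finset (PP K ι), ↑S ⊆ X ∧ S.card = k ∧ q ∈ projSpan (S : Set (PP K ι))}

/-- `𝒮(q,X)`: the set of minimal `X`-decompositions of `q`. -/
def decompositions (X : Set (PP K ι)) (q : PP K ι) : Set (Finset (PP K ι)) :=
  {S | ↑S ⊆ X ∧ S.card = xrank X q ∧ q ∈ projSpan (S : Set (PP K ι))}

/-- `X` is `k`-identifiable: a general point of `σ_k(X)` has a unique minimal
decomposition. -/
def Identifiable (X : Set (PP K ι)) (k : ℕ) : Prop :=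
  HoldsGenerically (secant k X) fun q => ∃! S : Finset (PP K ι), S ∈ decompositions X q

/-- `α` is the `k`-th secant degree of `X`. -/
def HasSecantDegree (X : Set (PP K ι)) (k α : ℕ) : Prop :=
  HoldsGenerically (secant k X) fun q => (decompositions X q).ncard = α

/-- Projective linear subspaces. -/
def IsProjLinear (L : Set (PP K ι)) : Prop :=
  L = projSpan L

/-- Lines in projective space. -/
def IsLine (L : Set (PP K ι)) : Prop :=
  IsProjLinear L ∧ Module.finrank K (vspan L) = 2

/-- `X` is uniruled by lines: through a general point of `X` there is a line
contained in `X`. -/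
def UniruledByLines (X : Set (PP K ι)) : Prop :=
  HoldsGenerically X fun x => ∃ L : Set (PP K ι), IsLine L ∧ x ∈ L ∧ L ⊆ X

/-- The join of two sets in projective space. -/
def join (A B : Set (PP K ι)) : Set (PP K ι) :=
  zclosure (⋃ a ∈ A, ⋃ b ∈ B, projSpan {a, b})

/-- The linear space `M` is tangent to `X` along `W`. -/
def TangentAlong (M X W : Set (PP K ι)) : Prop :=
  ∀ x ∈ W, IsSmoothPoint X x → embTangentSpace X x ⊆ M

/-- `S` has exactly `m` irreducible components, all of them projective linear
subspaces, and these components are linearly independent. -/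
def ComponentsAreIndepLinear (S : Set (PP K ι)) (m : ℕ) : Prop :=
  ∃ C : Fin m → Set (PP K ι), Function.Injective C ∧
    (∀ D : Set (PP K ι), IsZIrredComponent S D ↔ ∃ i, D = C i) ∧
    (∀ i, IsProjLinear (C i)) ∧
    Module.finrank K (vspan S) = ∑ i, Module.finrank K (vspan (C i))


/-- The Segre variety: the image of `ℙ^{n 1} × ⋯ × ℙ^{n s}` under the Segre
embedding, given by the complete linear system `|O(1,…,1)|`. -/
def segreVariety (K : Type*) [Field K] (s : ℕ) (n : Fin s → ℕ) :
    Set (PP K (∀ i : Fin s, Fin (n i + 1))) :=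
  {x | ∃ u : ∀ i : Fin s, Fin (n i + 1) → K,
    x.submodule = Submodule.span K
      ({fun t => ∏ i, u i (t i)} : Set ((∀ i : Fin s, Fin (n i + 1)) → K))}

/-- The projection of `L ⊆ Segre` to the `i`-th factor is a single point, i.e. `L`
lies in a single fiber of the `i`-th projection. -/
def SegreFactorIsPoint (K : Type*) [Field K] (s : ℕ) (n : Fin s → ℕ) (i : Fin s)
    (L : Set (PP K (∀ j : Fin s, Fin (n j + 1)))) : Prop :=
  ∃ w : Fin (n i + 1) → K, w ≠ 0 ∧ ∀ x ∈ L,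
    ∃ u : ∀ j : Fin s, Fin (n j + 1) → K,
      x.submodule = Submodule.span K
        ({fun t => ∏ j, u j (t j)} : Set ((∀ j : Fin s, Fin (n j + 1)) → K)) ∧
      u i ∈ Submodule.span K ({w} : Set (Fin (n i + 1) → K))

/-- Index type for the Segre–Veronese embedding of multidegree `d`:
multi-indices of degree `d i` in the homogeneous variables of the `i`-th factor. -/
abbrev svIndex (s : ℕ) (n d : Fin s → ℕ) : Type :=
  ∀ i : Fin s, {w : Fin (n i + 1) → Fin (d i + 1) // ∑ j, (w j : ℕ) = d i}

/-- The Segre–Veronese variety of multidegree `d`: the image of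
`ℙ^{n 1} × ⋯ × ℙ^{n s}` under the embedding by `|L_1^{d 1} ⊗ ⋯ ⊗ L_s^{d s}|`. -/
def segreVeroneseVariety (K : Type*) [Field K] (s : ℕ) (n d : Fin s → ℕ) :
    Set (PP K (svIndex s n d)) :=
  {x | ∃ u : ∀ i : Fin s, Fin (n i + 1) → K,
    x.submodule = Submodule.span K
      ({fun t => ∏ i, ∏ j, u i j ^ ((t i).1 j : ℕ)} : Set (svIndex s n d → K))}

/-- The vector of the moments of degree `≤ d` of the one-dimensional Gaussian
distribution with mean `μ` and variance `t`. -/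
def gaussMomentVec (K : Type*) [Field K] (d : ℕ) (μ t : K) : Fin (d + 1) → K := fun i =>
  ∑ j ∈ Finset.range ((i : ℕ) / 2 + 1),
    ((Nat.choose (i : ℕ) (2 * j) * Nat.doubleFactorial (2 * j - 1) : ℕ) : K) *
      t ^ j * μ ^ ((i : ℕ) - 2 * j)

/-- The Gaussian moment variety `𝒢_{1,d} ⊆ ℙ^d`. -/
def gaussianMomentVariety (K : Type*) [Field K] (d : ℕ) : Set (PP K (Fin (d + 1))) :=
  zclosure {x | ∃ μ t : K,
    x.submodule = Submodule.span K ({gaussMomentVec K d μ t} : Set (Fin (d + 1) → K))}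

/-- Zariski-closed families of `m`-tuples of coefficient vectors of linear forms. -/
def IsAffineClosedFamily {m : ℕ} (T : Set (Fin m → ι → K)) : Prop :=
  ∃ S : Set (MvPolynomial (Fin m × ι) K),
    T = {h | ∀ f ∈ S, MvPolynomial.eval (fun p => h p.1 p.2) f = 0}

/-- The linear subspace cut out by the `m` linear forms with coefficient vectors `h`. -/
def linearSlice {m : ℕ} (h : Fin m → ι → K) : Set (PP K ι) :=
  {x | ∀ j : Fin m, ∑ i : ι, h j i * x.rep i = 0}

/-- `x` lies on the hyperplane with coefficient vector `f`. -/
def inHyperplane (f : ι → K) (x : PP K ι) : Prop :=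
  ∑ i : ι, f i * x.rep i = 0

/-- `X ⊆ ℙ^r` (of dimension `n`, `r + 1 = card ι`) is very strange: for a general
codimension-`n` linear subspace `M`, some `r - n + 2` points of `X ∩ M` lie in a
hyperplane of `M`, i.e. in a linear subspace of projective dimension `r - n - 1`. -/
def VeryStrange (n : ℕ) (X : Set (PP K ι)) : Prop :=
  ∃ T : Set (Fin n → ι → K), IsAffineClosedFamily T ∧ (∃ h, h ∉ T) ∧
    ∀ h : Fin n → ι → K, h ∉ T →
      ∃ A : Finset (PP K ι), ↑A ⊆ X ∩ linearSlice h ∧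
        A.card = Fintype.card ι + 1 - n ∧
        Module.finrank K (vspan (A : Set (PP K ι))) ≤ Fintype.card ι - 1 - n

open Finset MvPolynomial

section ProjectiveGeometry

variable {σ : Type*}

theorem subset_zclosure (S : Set (PP K σ)) : S ⊆ zclosure S :=
  fun _ hx => Set.mem_sInter.mpr fun _ hY => hY.2 hx

theorem zclosure_subset {S Y : Set (PP K σ)} (hY : IsZClosed Y) (hSY : S ⊆ Y) :
    zclosure S ⊆ Y :=
  Set.sInter_subset_of_mem ⟨hY, hSY⟩

theorem isZClosed_zeroLocus_singleton {f : MvPolynomial σ K} {n : ℕ} (hf : f.IsHomogeneous n) :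
    IsZClosed (zeroLocus {f}) :=
  ⟨{f}, by rintro _ rfl; exact ⟨n, hf⟩, rfl⟩

theorem mem_vspan_of_mem_submodule {L : Set (PP K σ)} {x : PP K σ} {v : σ → K} (hx : x ∈ L)
    (hv : v ∈ x.submodule) : v ∈ vspan L :=
  Submodule.subset_span (Set.mem_biUnion hx hv)

theorem IsProjLinear.mk_mem {L : Set (PP K σ)} (hL : IsProjLinear L) {v : σ → K}
    (hv : v ∈ vspan L) (hv0 : v ≠ 0) : Projectivization.mk K v hv0 ∈ L := by
  rw [hL]
  show (Projectivization.mk K v hv0).submodule ≤ vspan L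
  rwa [Projectivization.submodule_mk, Submodule.span_singleton_le_iff_mem]

theorem IsProjLinear.eval_eq_zero {L : Set (PP K σ)} (hL : IsProjLinear L) {f : MvPolynomial σ K}
    (hLf : L ⊆ zeroLocus {f}) {v : σ → K} (hv : v ∈ vspan L) (hv0 : v ≠ 0) :
    eval v f = 0 :=
  hLf (hL.mk_mem hv hv0) f rfl v (by
    rw [Projectivization.submodule_mk]; exact Submodule.mem_span_singleton_self v)

theorem IsLine.exists_direction {L : Set (PP K σ)} (hL : IsLine L) {g : σ → K}
    (hg : g ∈ vspan L) {i : σ} (hgi : g i = 1) : ∃ b ∈ vspan L, b ≠ 0 ∧ b i = 0 := by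
  have hg0 : g ≠ 0 := fun h => by simp [h] at hgi
  obtain ⟨w, hw, hwg⟩ : ∃ w ∈ vspan L, w ∉ K ∙ g := by
    refine SetLike.not_le_iff_exists.mp fun hle => ?_
    have := Submodule.finrank_mono hle
    rw [hL.2, finrank_span_singleton hg0] at this
    omega
  refine ⟨w - w i • g, (vspan L).sub_mem hw ((vspan L).smul_mem _ hg), fun h => hwg ?_, ?_⟩
  · rw [sub_eq_zero.mp h]
    exact Submodule.smul_mem _ _ (Submodule.mem_span_singleton_self g)
  · simp [hgi]

end ProjectiveGeometry

section Moments

open Nat in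
def gaussCoeff (n j : ℕ) : ℕ :=
  n.choose (2 * j) * (2 * j - 1)‼

theorem gaussCoeff_eq_zero {n j : ℕ} (h : n < 2 * j) : gaussCoeff n j = 0 := by
  simp [gaussCoeff, Nat.choose_eq_zero_of_lt h]

open Nat in
theorem gaussCoeff_succ_succ (n j : ℕ) :
    gaussCoeff (n + 2) (j + 1) = gaussCoeff (n + 1) (j + 1) + (n + 1) * gaussCoeff n j := by
  have hpascal : (n + 2).choose (2 * j + 2) = (n + 1).choose (2 * j + 1)
      + (n + 1).choose (2 * j + 2) := Nat.choose_succ_succ (n + 1) (2 * j + 1)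
  have hdf : (2 * j + 1)‼ = (2 * j + 1) * (2 * j - 1)‼ := Nat.doubleFactorial_add_one (2 * j)
  have habsorb : (n + 1).choose (2 * j + 1) * (2 * j + 1) = (n + 1) * n.choose (2 * j) :=
    (Nat.add_one_mul_choose_eq n (2 * j)).symm
  rw [gaussCoeff, gaussCoeff, gaussCoeff, show 2 * (j + 1) = 2 * j + 2 by ring,
    show 2 * j + 2 - 1 = 2 * j + 1 by omega, hpascal, hdf]
  linear_combination (2 * j - 1)‼ * habsorb

def gaussMoment (μ t : K) (n : ℕ) : K :=
  ∑ j ∈ range (n / 2 + 1), (gaussCoeff n j : K) * t ^ j * μ ^ (n - 2 * j)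

theorem gaussMomentVec_apply (d : ℕ) (μ t : K) (i : Fin (d + 1)) :
    gaussMomentVec K d μ t i = gaussMoment μ t i :=
  rfl

theorem gaussMoment_eq_sum_range (μ t : K) {n N : ℕ} (hN : n / 2 < N) :
    gaussMoment μ t n = ∑ j ∈ range N, (gaussCoeff n j : K) * t ^ j * μ ^ (n - 2 * j) := by
  refine sum_subset (range_subset_range.mpr hN) fun j _ hj => ?_
  rw [gaussCoeff_eq_zero (by simp at hj; omega), Nat.cast_zero, zero_mul, zero_mul]

theorem gaussMoment_zero (μ t : K) : gaussMoment μ t 0 = 1 := by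
  simp [gaussMoment, gaussCoeff]

theorem gaussMomentVec_zero (d : ℕ) (μ t : K) : gaussMomentVec K d μ t 0 = 1 :=
  gaussMoment_zero μ t

theorem gaussMoment_one (μ t : K) : gaussMoment μ t 1 = μ := by
  simp [gaussMoment, gaussCoeff]

theorem gaussMoment_two (μ t : K) : gaussMoment μ t 2 = μ ^ 2 + t := by
  simp [gaussMoment, gaussCoeff, sum_range_succ, add_comm]

theorem gaussMoment_add_two (μ t : K) (n : ℕ) :
    gaussMoment μ t (n + 2) =
      μ * gaussMoment μ t (n + 1) + (n + 1) * t * gaussMoment μ t n := by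
  rw [gaussMoment_eq_sum_range μ t (N := n + 3) (by omega),
    gaussMoment_eq_sum_range μ t (n := n + 1) (N := n + 3) (by omega),
    gaussMoment_eq_sum_range μ t (n := n) (N := n + 2) (by omega),
    sum_range_succ', sum_range_succ' _ (n + 2), mul_add, mul_sum, mul_sum, add_right_comm,
    ← sum_add_distrib]
  congr 1
  · refine sum_congr rfl fun j _ => ?_
    rw [gaussCoeff_succ_succ, show n + 2 - 2 * (j + 1) = n - 2 * j by omega]
    rcases lt_or_ge n (2 * j + 1) with h | h
    · rw [gaussCoeff_eq_zero (by omega : n + 1 < 2 * (j + 1))]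
      push_cast
      ring
    · rw [show n - 2 * j = n + 1 - 2 * (j + 1) + 1 by omega]
      push_cast
      ring
  · simp [gaussCoeff, pow_succ']

end Moments

section CubicRelations

variable {R : Type*} [CommRing R]

/-- The recursion `m (n + 2) = μ m (n + 1) + (n + 1) t m n` of Gaussian moments, with
`μ = m 1 / m 0` and `t = (m 0 m 2 - m 1 ^ 2) / m 0 ^ 2`, made homogeneous. -/
def momentCubic (m : ℕ → R) (n : ℕ) : R :=
  m 0 ^ 2 * m (n + 2) - m 0 * m 1 * m (n + 1) - (n + 1) * (m 0 * m 2 - m 1 ^ 2) * m n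

theorem momentCubic_congr {m m' : ℕ → R} {n : ℕ} (h : ∀ i ≤ n + 2, m i = m' i) :
    momentCubic m n = momentCubic m' n := by
  simp only [momentCubic, h 0 (by omega), h 1 (by omega), h 2 (by omega), h n (by omega),
    h (n + 1) (by omega), h (n + 2) le_rfl]

theorem momentCubic_smul (c : R) (m : ℕ → R) (n : ℕ) :
    momentCubic (c • m) n = c ^ 3 * momentCubic m n := by
  simp only [momentCubic, Pi.smul_apply, smul_eq_mul]
  ring

theorem map_momentCubic {S : Type*} [CommRing S] (f : R →+* S) (m : ℕ → R) (n : ℕ) :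
    f (momentCubic m n) = momentCubic (fun i => f (m i)) n := by
  simp [momentCubic]

theorem momentCubic_gaussMoment (μ t : K) (n : ℕ) :
    momentCubic (gaussMoment μ t) n = 0 := by
  rw [momentCubic, gaussMoment_add_two, gaussMoment_zero, gaussMoment_one, gaussMoment_two]
  ring

end CubicRelations

section GaussianMomentVariety

open Fin.NatCast

def momentCubicPoly (K : Type*) [Field K] (d n : ℕ) : MvPolynomial (Fin (d + 1)) K :=
  momentCubic (fun i => X (i : Fin (d + 1))) n

theorem isHomogeneous_momentCubicPoly (d n : ℕ) : (momentCubicPoly K d n).IsHomogeneous 3 := by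
  have hX (i : ℕ) : (X (i : Fin (d + 1)) : MvPolynomial (Fin (d + 1)) K).IsHomogeneous 1 :=
    isHomogeneous_X K _
  have hc : ((n : MvPolynomial (Fin (d + 1)) K) + 1).IsHomogeneous 0 := by
    simpa using isHomogeneous_C (Fin (d + 1)) ((n : K) + 1)
  exact ((hX 0).pow 2 |>.mul (hX _)).sub (((hX 0).mul (hX 1)).mul (hX _)) |>.sub
    ((hc.mul (((hX 0).mul (hX 2)).sub ((hX 1).pow 2))).mul (hX n))

theorem eval_momentCubicPoly (d n : ℕ) (v : Fin (d + 1) → K) :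
    eval v (momentCubicPoly K d n) = momentCubic (fun i => v i) n := by
  simp [momentCubicPoly, map_momentCubic]

theorem gaussianMomentVariety_subset_zeroLocus {d n : ℕ} (hn : n + 2 ≤ d) :
    gaussianMomentVariety K d ⊆ zeroLocus {momentCubicPoly K d n} := by
  refine zclosure_subset (isZClosed_zeroLocus_singleton (isHomogeneous_momentCubicPoly d n)) ?_
  rintro x ⟨μ, t, hx⟩ _ rfl v hv
  rw [hx, Submodule.mem_span_singleton] at hv
  obtain ⟨c, rfl⟩ := hv
  rw [eval_momentCubicPoly, momentCubic_congr (m' := c • gaussMoment μ t) fun i hi => ?_,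
    momentCubic_smul, momentCubic_gaussMoment, mul_zero]
  rw [Pi.smul_apply, gaussMomentVec_apply, Fin.val_cast_of_lt (by omega), Pi.smul_apply]

end GaussianMomentVariety

section Lines

variable {a b : ℕ → K}

theorem apply_one_eq_zero_of_momentCubic_add_smul [CharZero K] (ha : a 0 = 1) (hb : b 0 = 0)
    (h : ∀ s : K, momentCubic (a + s • b) 1 = 0) : b 1 = 0 := by
  simp only [momentCubic, Pi.add_apply, Pi.smul_apply, smul_eq_mul, ha, hb] at h
  -- the `s ^ 3`-coefficient `2 b 1 ^ 3` is a sixth of the third finite difference at `0, 1, 2, 3`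
  have : b 1 ^ 3 = 0 := by
    linear_combination (1 / 12 : K) * h 3 - (1 / 4 : K) * h 2 + (1 / 4 : K) * h 1
      - (1 / 12 : K) * h 0
  exact pow_eq_zero_iff (by norm_num) |>.mp this

theorem apply_two_eq_zero_of_momentCubic_add_smul [CharZero K] (ha : a 0 = 1) (hb : b 0 = 0)
    (hb1 : b 1 = 0) (h : ∀ s : K, momentCubic (a + s • b) 2 = 0) : b 2 = 0 := by
  simp only [momentCubic, Pi.add_apply, Pi.smul_apply, smul_eq_mul, ha, hb, hb1] at h
  -- the `s ^ 2`-coefficient `-3 b 2 ^ 2` is half the second finite difference at `0, 1, 2`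
  have : b 2 ^ 2 = 0 := by
    linear_combination (-1 / 6 : K) * h 2 + (1 / 3 : K) * h 1 - (1 / 6 : K) * h 0
  exact pow_eq_zero_iff (by norm_num) |>.mp this

theorem apply_add_two_eq_zero_of_momentCubic_add_smul (ha : a 0 = 1) (hb : b 0 = 0)
    (hb1 : b 1 = 0) (hb2 : b 2 = 0) {n : ℕ} (hbn : b n = 0) (hbn1 : b (n + 1) = 0)
    (h : ∀ s : K, momentCubic (a + s • b) n = 0) : b (n + 2) = 0 := by
  simp only [momentCubic, Pi.add_apply, Pi.smul_apply, smul_eq_mul, ha, hb, hb1, hb2, hbn,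
    hbn1] at h
  linear_combination h 1 - h 0

theorem eq_zero_of_momentCubic_add_smul [CharZero K] {d : ℕ} (hd : 4 ≤ d) (ha : a 0 = 1)
    (hb : b 0 = 0) (h : ∀ n, n + 2 ≤ d → ∀ s : K, momentCubic (a + s • b) n = 0) :
    ∀ i ≤ d, b i = 0 := by
  have hb1 := apply_one_eq_zero_of_momentCubic_add_smul ha hb (h 1 (by omega))
  have hb2 := apply_two_eq_zero_of_momentCubic_add_smul ha hb hb1 (h 2 (by omega))
  intro i
  induction i using Nat.strong_induction_on with
  | _ i ih =>
    intro hi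
    match i, ih with
    | 0, _ => exact hb
    | 1, _ => exact hb1
    | 2, _ => exact hb2
    | n + 3, ih =>
      exact apply_add_two_eq_zero_of_momentCubic_add_smul ha hb hb1 hb2
        (ih (n + 1) (by omega) (by omega)) (ih (n + 2) (by omega) (by omega)) (h (n + 1) hi)

end Lines

open Fin.NatCast in
theorem IsProjLinear.eq_zero_of_subset_gaussianMomentVariety [CharZero K] {d : ℕ} (hd : 4 ≤ d)
    {L : Set (PP K (Fin (d + 1)))} (hL : IsProjLinear L) (hLX : L ⊆ gaussianMomentVariety K d)
    {μ t : K} (hg : gaussMomentVec K d μ t ∈ vspan L)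
    {b : Fin (d + 1) → K} (hbL : b ∈ vspan L) (hb0 : b 0 = 0) : b = 0 := by
  set g := gaussMomentVec K d μ t
  have hcubic (n : ℕ) (hn : n + 2 ≤ d) (s : K) :
      momentCubic (gaussMoment μ t + s • fun i : ℕ => b i) n = 0 := by
    have hv0 : g + s • b ≠ 0 := fun h => by
      simpa [g, gaussMomentVec_zero, hb0] using congr_fun h 0
    rw [← hL.eval_eq_zero (hLX.trans (gaussianMomentVariety_subset_zeroLocus hn))
      ((vspan L).add_mem hg ((vspan L).smul_mem s hbL)) hv0, eval_momentCubicPoly]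
    refine momentCubic_congr fun j hj => ?_
    simp [g, gaussMomentVec_apply, Fin.val_cast_of_lt (show j < d + 1 by omega)]
  funext i
  simpa using eq_zero_of_momentCubic_add_smul hd (gaussMoment_zero μ t) (by simpa using hb0)
    hcubic i (Nat.lt_succ_iff.mp i.isLt)

theorem statement16_general {K : Type*} [Field K] [CharZero K]
    (d : ℕ) (hd : 4 ≤ d) :
    ¬UniruledByLines (gaussianMomentVariety K d) := by
  rintro ⟨Y, hY, hXY, hlines⟩
  obtain ⟨x, ⟨μ, t, hx⟩, hxY⟩ := Set.not_subset.mp fun h => hXY (zclosure_subset hY h)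
  obtain ⟨L, hL, hxL, hLX⟩ := hlines x ⟨subset_zclosure _ ⟨μ, t, hx⟩, hxY⟩
  have hg : gaussMomentVec K d μ t ∈ vspan L :=
    mem_vspan_of_mem_submodule hxL (hx ▸ Submodule.mem_span_singleton_self _)
  obtain ⟨b, hbL, hb, hb0⟩ := hL.exists_direction hg (gaussMomentVec_zero d μ t)
  exact hb (hL.1.eq_zero_of_subset_gaussianMomentVariety hd hLX hg hbL hb0)

/-- **Example (r+1).**  For every `d ≥ 4`, the Gaussian moment surface
`𝒢_{1,d} ⊆ ℙ^d` is not uniruled by lines. -/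
theorem statement16 {K : Type*} [Field K] [IsAlgClosed K] [CharZero K]
    (d : ℕ) (hd : 4 ≤ d) :
    ¬UniruledByLines (gaussianMomentVariety K d) :=
  statement16_general d hd

end ContactLoci
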